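/- If q ≠ 0 then each bowling-ball matrix M_i is invertible, with inverse M_i^{-1} = q^{-1}·(M_i + (q − 1)·I); that is, M_i · (q^{-1}·(M_i + (q−1)·I)) = I and (q^{-1}·(M_i + (q−1)·I)) · M_i = I. -/

import Mathlib

/-!
`M_i` fixes `e_u` when `u i = u (i+1)` and otherwise preserves the plane spanned by `e_u` and
`e_{s_i u}`; checking on basis vectors gives the quadratic relation `M_i² = q + (1 - q) M_i`,
i.e. `(M_i - 1)(M_i + q) = 0`. For `q ≠ 0` any element of an algebra satisfying this relation
has inverse `q⁻¹ (M_i + (q - 1))`.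
-/

open Matrix

/-- The tuple `u` with the entries in positions `i` and `i+1` interchanged
(0-indexed; returns `u` unchanged if `i+1` is out of range). -/
def swapTup (n N : ℕ) (i : ℕ) (u : Fin n → Fin (N + 1)) : Fin n → Fin (N + 1) :=
  if h : i + 1 < n then u ∘ Equiv.swap ⟨i, Nat.lt_of_succ_lt h⟩ ⟨i + 1, h⟩ else u

/-- Jones's bowling-ball matrix `M_i` (0-indexed: `i` ranges over `0,…,n-2`,
corresponding to the lanes `i+1` and `i+2` in 1-indexed notation; it is the
identity matrix out of range).  Rows and columns are indexed by the tuples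
`u : Fin n → Fin (N+1)` recording the number of balls in each lane:
`M_i e_u = e_{s_i u}` if `u i ≤ u (i+1)`, and
`M_i e_u = q • e_{s_i u} + (1-q) • e_u` if `u i > u (i+1)`. -/
def bowlM (F : Type*) [Field F] (q : F) (n N : ℕ) (i : ℕ) :
    Matrix (Fin n → Fin (N + 1)) (Fin n → Fin (N + 1)) F :=
  if h : i + 1 < n then
    Matrix.of fun v u =>
      if u ⟨i, Nat.lt_of_succ_lt h⟩ ≤ u ⟨i + 1, h⟩ then
        (if v = swapTup n N i u then 1 else 0)
      else
        q * (if v = swapTup n N i u then 1 else 0) + (1 - q) * (if v = u then 1 else 0)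
  else 1

theorem inverse_of_quadratic_relation {K A : Type*} [Field K] [Ring A] [Algebra K A]
    {q : K} (hq : q ≠ 0) {M : A} (h : M * M = q • 1 + (1 - q) • M) :
    M * (q⁻¹ • (M + (q - 1) • 1)) = 1 ∧ (q⁻¹ • (M + (q - 1) • 1)) * M = 1 := by
  have key : M * M + (q - 1) • M = q • 1 := by
    rw [h, add_assoc, ← add_smul, sub_add_sub_cancel', sub_self, zero_smul, add_zero]
  constructor
  · rw [mul_smul_comm, mul_add, mul_smul_comm, mul_one, key, smul_smul, inv_mul_cancel₀ hq, one_smul]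
  · rw [smul_mul_assoc, add_mul, smul_mul_assoc, one_mul, key, smul_smul, inv_mul_cancel₀ hq, one_smul]

section

variable {n N i : ℕ}

theorem swapTup_involutive : Function.Involutive (swapTup n N i) := by
  intro u
  unfold swapTup
  split_ifs
  · funext x; simp
  · rfl

theorem swapTup_apply_fst (hi : i + 1 < n) (u : Fin n → Fin (N + 1)) :
    swapTup n N i u ⟨i, Nat.lt_of_succ_lt hi⟩ = u ⟨i + 1, hi⟩ := by
  simp [swapTup, hi]

theorem swapTup_apply_snd (hi : i + 1 < n) (u : Fin n → Fin (N + 1)) :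
    swapTup n N i u ⟨i + 1, hi⟩ = u ⟨i, Nat.lt_of_succ_lt hi⟩ := by
  simp [swapTup, hi]

theorem swapTup_eq_self (hi : i + 1 < n) {u : Fin n → Fin (N + 1)}
    (h : u ⟨i, Nat.lt_of_succ_lt hi⟩ = u ⟨i + 1, hi⟩) : swapTup n N i u = u := by
  funext x
  simp only [swapTup, hi, dite_true, Function.comp_apply, Equiv.swap_apply_def]
  split_ifs with h1 h2 <;> simp_all

variable {F : Type*} [Field F] (q : F)

theorem bowlM_mulVec_single_of_le (hi : i + 1 < n) {w : Fin n → Fin (N + 1)}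
    (hw : w ⟨i, Nat.lt_of_succ_lt hi⟩ ≤ w ⟨i + 1, hi⟩) :
    bowlM F q n N i *ᵥ Pi.single w 1 = Pi.single (swapTup n N i w) 1 := by
  ext v
  simp [bowlM, hi, hw, Pi.single_apply]

theorem bowlM_mulVec_single_of_lt (hi : i + 1 < n) {w : Fin n → Fin (N + 1)}
    (hw : w ⟨i + 1, hi⟩ < w ⟨i, Nat.lt_of_succ_lt hi⟩) :
    bowlM F q n N i *ᵥ Pi.single w 1 =
      q • Pi.single (swapTup n N i w) 1 + (1 - q) • Pi.single w 1 := by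
  ext v
  simp [bowlM, hi, hw.not_ge, Pi.single_apply]

theorem bowlM_mul_self (i : ℕ) :
    bowlM F q n N i * bowlM F q n N i = q • 1 + (1 - q) • bowlM F q n N i := by
  by_cases hi : i + 1 < n
  swap
  · simp [bowlM, hi, ← add_smul]
  refine ext_of_mulVec_single fun w => ?_
  set M := bowlM F q n N i
  set e : (Fin n → Fin (N + 1)) → (Fin n → Fin (N + 1)) → F := fun u => Pi.single u 1
  have hsw_fst := swapTup_apply_fst (N := N) hi w
  have hsw_snd := swapTup_apply_snd (N := N) hi w
  rw [← mulVec_mulVec, add_mulVec, smul_mulVec,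
    smul_mulVec, one_mulVec]
  rcases lt_trichotomy (w ⟨i, Nat.lt_of_succ_lt hi⟩) (w ⟨i + 1, hi⟩) with hlt | heq | hgt
  · have hsw : M *ᵥ e (swapTup n N i w) = q • e w + (1 - q) • e (swapTup n N i w) := by
      rw [bowlM_mulVec_single_of_lt q hi (by rwa [hsw_fst, hsw_snd]), swapTup_involutive]
    rw [bowlM_mulVec_single_of_le q hi hlt.le, hsw]
  · have hfix : M *ᵥ e w = e w := by
      rw [bowlM_mulVec_single_of_le q hi heq.le, swapTup_eq_self hi heq]
    rw [hfix, hfix, ← add_smul, add_sub_cancel, one_smul]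
  · have hsw : M *ᵥ e (swapTup n N i w) = e w := by
      rw [bowlM_mulVec_single_of_le q hi (by rw [hsw_fst, hsw_snd]; exact hgt.le),
        swapTup_involutive]
    rw [bowlM_mulVec_single_of_lt q hi hgt, mulVec_add, mulVec_smul,
      mulVec_smul, hsw, bowlM_mulVec_single_of_lt q hi hgt]

end

theorem bowlM_invertible_general (F : Type*) [Field F] (q : F) (n N : ℕ)
    (hq : q ≠ 0) (i : ℕ) :
    bowlM F q n N i *
        (q⁻¹ • (bowlM F q n N i + (q - 1) • (1 : Matrix (Fin n → Fin (N + 1)) (Fin n → Fin (N + 1)) F))) = 1 ∧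
      (q⁻¹ • (bowlM F q n N i + (q - 1) • (1 : Matrix (Fin n → Fin (N + 1)) (Fin n → Fin (N + 1)) F))) *
        bowlM F q n N i = 1 :=
  inverse_of_quadratic_relation hq (bowlM_mul_self q i)

/-- **Invertibility of the bowling-ball matrices when `q ≠ 0`.**
For every index `i` (0-indexed, so `i+1 < n` corresponds to `1 ≤ i ≤ n-1`
in 1-indexed notation), if `q ≠ 0` then `M_i` is invertible with inverse
`q⁻¹ · (M_i + (q − 1) · I)`. -/
theorem bowlM_invertible (F : Type*) [Field F] (q : F) (n N : ℕ)
    (hn : 2 ≤ n) (hN : 1 ≤ N) (hq : q ≠ 0) (i : ℕ) (hi : i + 1 < n) :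
    bowlM F q n N i *
        (q⁻¹ • (bowlM F q n N i + (q - 1) • (1 : Matrix (Fin n → Fin (N + 1)) (Fin n → Fin (N + 1)) F))) = 1 ∧
      (q⁻¹ • (bowlM F q n N i + (q - 1) • (1 : Matrix (Fin n → Fin (N + 1)) (Fin n → Fin (N + 1)) F))) *
        bowlM F q n N i = 1 :=
  bowlM_invertible_general F q n N hq i
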